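/- Suppose c_n < 1, where c_n = sup({|X_{n,φ}(H)|/|H| : H finite, φ ∈ Aut(H), φⁿ = id} \ {1}). Then every profinite group G in which the set X_n(G) of solutions of xⁿ = 1 has positive Haar measure contains a normal open subgroup M and an element g such that every element of the coset Mg has order dividing n. -/

import Mathlib

/-! The closed set `X = {x | xⁿ = 1}` has positive measure, so by outer regularity some open normal
subgroup `N` has a coset `x₀N`, with `x₀ ∈ X`, in which `X` has relative measure `> c`. For an open
normal `M ≤ N`, conjugation by `x₀` induces an automorphism `φ` of `H = N/M` with `φⁿ = 1`, and
since the twisted product `w w^φ ⋯ w^{φⁿ⁻¹}` telescopes to `(w x₀)ⁿ x₀⁻ⁿ`, the coset `wM` lies in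
`X_{n,φ}(H)` exactly when `(w x₀)ⁿ ∈ M`. Counting cosets of `M` gives `|X_{n,φ}(H)| / |H| > c`, so
the ratio is `1`; hence `(w x₀)ⁿ` lies in every open normal subgroup, which forces `(w x₀)ⁿ = 1`. -/

open MeasureTheory Pointwise ENNReal

theorem QuotientGroup.preimage_mk_singleton_mk {G : Type*} [Group G] (M : Subgroup G) (g : G) :
    (QuotientGroup.mk : G → G ⧸ M) ⁻¹' {(g : G ⧸ M)} = g • (M : Set G) := by
  rw [← Set.image_singleton, QuotientGroup.preimage_image_mk_eq_mul, Set.singleton_mul]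
  rfl

section Counting

variable {G : Type*} [Group G] [MeasurableSpace G] [MeasurableMul G]
  (μ : Measure G) [μ.IsMulLeftInvariant]

theorem measure_preimage_mk_eq_ncard_mul {M : Subgroup G} (hM : MeasurableSet (M : Set G))
    {S : Set (G ⧸ M)} (hS : S.Finite) :
    μ ((QuotientGroup.mk : G → G ⧸ M) ⁻¹' S) = S.ncard * μ M := by
  obtain ⟨s, rfl⟩ := hS.exists_finset_coe
  have hcoset : ∀ q : G ⧸ M, (QuotientGroup.mk : G → G ⧸ M) ⁻¹' {q} = q.out • (M : Set G) := by
    intro q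
    conv_lhs => rw [← QuotientGroup.out_eq' q]
    exact QuotientGroup.preimage_mk_singleton_mk M q.out
  have hunion : (QuotientGroup.mk : G → G ⧸ M) ⁻¹' s = ⋃ q ∈ s, QuotientGroup.mk ⁻¹' {q} := by
    ext; simp
  rw [hunion, measure_biUnion_finset, Set.ncard_coe_finset, ← nsmul_eq_mul, ← Finset.sum_const]
  · refine Finset.sum_congr rfl fun q _ => ?_
    rw [hcoset, measure_smul]
  · exact fun q _ r _ hqr => (Set.disjoint_singleton.2 hqr).preimage _
  · exact fun q _ => hcoset q ▸ hM.const_smul _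

theorem exists_mul_measure_lt_measure_inter_smul {N : Subgroup G} [Finite (G ⧸ N)]
    (hN : MeasurableSet (N : Set G)) {X : Set G} {a : ℝ≥0∞} (h : a * μ (X * N) < μ X) :
    ∃ x ∈ X, a * μ N < μ (X ∩ x • (N : Set G)) := by
  obtain ⟨s, hs⟩ := (Set.toFinite ((QuotientGroup.mk : G → G ⧸ N) '' X)).exists_finset_coe
  have hsum : ∑ _q ∈ s, a * μ N < ∑ q ∈ s, μ (X ∩ QuotientGroup.mk ⁻¹' {q}) :=
    calc ∑ _q ∈ s, a * μ N = a * μ (X * N) := by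
          rw [Finset.sum_const, nsmul_eq_mul, ← QuotientGroup.preimage_image_mk_eq_mul, ← hs,
            measure_preimage_mk_eq_ncard_mul μ hN s.finite_toSet, Set.ncard_coe_finset,
            mul_left_comm]
      _ < μ X := h
      _ ≤ μ (⋃ q ∈ s, X ∩ QuotientGroup.mk ⁻¹' {q}) := by
          refine measure_mono fun x hx => Set.mem_biUnion (x := (x : G ⧸ N)) ?_ ⟨hx, rfl⟩
          exact hs ▸ Set.mem_image_of_mem _ hx
      _ ≤ ∑ q ∈ s, μ (X ∩ QuotientGroup.mk ⁻¹' {q}) := measure_biUnion_finset_le _ _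
  obtain ⟨q, hq, hlt⟩ := Finset.exists_lt_of_sum_lt hsum
  obtain ⟨x, hx, rfl⟩ : q ∈ (QuotientGroup.mk : G → G ⧸ N) '' X := hs ▸ hq
  exact ⟨x, hx, by rwa [QuotientGroup.preimage_mk_singleton_mk] at hlt⟩

theorem measure_eq_card_map_mk'_mul {M N : Subgroup G} [M.Normal] [Finite (G ⧸ M)]
    (hM : MeasurableSet (M : Set G)) (hMN : M ≤ N) :
    μ N = Nat.card (N.map (QuotientGroup.mk' M)) * μ M := by
  have hpre : ((N.map (QuotientGroup.mk' M)).comap (QuotientGroup.mk' M) : Set G) = N := by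
    rw [Subgroup.comap_map_eq, QuotientGroup.ker_mk', sup_eq_left.2 hMN]
  rw [← SetLike.coe_sort_coe, Nat.card_coe_set_eq,
    ← measure_preimage_mk_eq_ncard_mul μ hM (Set.toFinite _)]
  exact congrArg μ hpre.symm

end Counting

theorem exists_openNormalSubgroup_mul_measure_mul_lt {G : Type*} [Group G] [TopologicalSpace G]
    [IsTopologicalGroup G] [CompactSpace G] [TotallyDisconnectedSpace G] [MeasurableSpace G]
    (μ : Measure G) [μ.OuterRegular] [IsFiniteMeasure μ]
    {X : Set G} (hX : IsClosed X) (hX0 : μ X ≠ 0) {a : ℝ≥0∞} (ha : a < 1) :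
    ∃ N : OpenNormalSubgroup G, a * μ (X * (N : Set G)) < μ X := by
  have hdiv : ∀ {b : ℝ≥0∞}, b ≠ ⊤ → (b < μ X / a ↔ b * a < μ X) := fun hb =>
    ENNReal.lt_div_iff_mul_lt (Or.inr hb) (Or.inl ha.ne_top)
  have hX_lt : μ X < μ X / a :=
    (hdiv (measure_ne_top μ X)).2
      (by simpa [mul_comm] using ENNReal.mul_lt_mul_left hX0 (measure_ne_top μ X) ha)
  obtain ⟨U, hXU, hU, hμU⟩ := X.exists_isOpen_lt_of_lt _ hX_lt
  obtain ⟨V, hV, hXV⟩ := compact_open_separated_mul_right hX.isCompact hU hXU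
  obtain ⟨W, hWV, hW, hW1⟩ := mem_nhds_iff.1 hV
  obtain ⟨N, hNW⟩ := ProfiniteGrp.exist_openNormalSubgroup_sub_open_nhds_of_one hW hW1
  refine ⟨N, mul_comm a _ ▸ (hdiv (measure_ne_top μ _)).1 ?_⟩
  exact (measure_mono ((Set.mul_subset_mul_left (hNW.trans hWV)).trans hXV)).trans_lt hμU

/-- The set `X_{n,φ}(H)`. -/
def twistedSolutions {H : Type*} [Group H] (n : ℕ) (φ : MulAut H) : Set H :=
  {x | ((List.range n).map fun i => (φ ^ i) x).prod = 1}

section Twisted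

variable {K : Type*} [Group K] {L : Subgroup K} [L.Normal]

theorem coe_prod_conjNormal_pow_mul_pow (g : K) (l : L) (k : ℕ) :
    (((List.range k).map fun i => (MulAut.conjNormal g ^ i) l).prod : K) * g ^ k
      = ((l : K) * g) ^ k := by
  induction k with
  | zero => simp
  | succ k ih =>
    rw [List.range_succ, List.map_append, List.prod_append, Subgroup.coe_mul, pow_succ (_ * g),
      ← ih]
    simp only [List.map_cons, List.map_nil, List.prod_cons, List.prod_nil, mul_one, ← map_pow,
      MulAut.conjNormal_apply]
    group

theorem mem_twistedSolutions_conjNormal_iff {n : ℕ} {g : K} (hg : g ^ n = 1) (l : L) :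
    l ∈ twistedSolutions n (MulAut.conjNormal g) ↔ ((l : K) * g) ^ n = 1 := by
  rw [twistedSolutions, Set.mem_ofPred_eq, ← OneMemClass.coe_eq_one,
    ← coe_prod_conjNormal_pow_mul_pow, hg, mul_one]

end Twisted

theorem Set.eq_univ_of_mul_card_lt_card {H : Type*} [Finite H] [Nonempty H] {Y : Set H} {c : ℝ}
    (hY : (Nat.card Y : ℝ) / Nat.card H ≠ 1 → (Nat.card Y : ℝ) / Nat.card H ≤ c)
    (hlt : c * Nat.card H < Nat.card Y) : Y = Set.univ := by
  have hH : (0 : ℝ) < Nat.card H := by exact_mod_cast Nat.card_pos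
  have hratio : (Nat.card Y : ℝ) / Nat.card H = 1 := by
    by_contra hne
    linarith [hY hne, (lt_div_iff₀ hH).2 hlt]
  have hcard : Nat.card Y = Nat.card H := by
    exact_mod_cast (div_eq_one_iff_eq hH.ne').1 hratio
  refine Set.eq_of_subset_of_ncard_le (Set.subset_univ Y) ?_
  rw [Set.ncard_univ, ← Nat.card_coe_set_eq, hcard]

theorem pow_mem_of_lt_measure_inter_smul {n : ℕ} {c : ℝ}
    (hub : ∀ (H : Type) [Group H] [Fintype H] (φ : MulAut H), φ ^ n = 1 →
      (Nat.card (twistedSolutions n φ) : ℝ) / Nat.card H ≠ 1 →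
      (Nat.card (twistedSolutions n φ) : ℝ) / Nat.card H ≤ c)
    {G : Type} [Group G] [TopologicalSpace G] [IsTopologicalGroup G] [CompactSpace G]
    [MeasurableSpace G] [BorelSpace G] (μ : Measure G) [μ.IsMulLeftInvariant] [IsFiniteMeasure μ]
    [μ.IsOpenPosMeasure] {M N : Subgroup G} [M.Normal] [N.Normal] (hM : IsOpen (M : Set G))
    (hMN : M ≤ N) {x₀ : G} (hx₀ : x₀ ^ n = 1)
    (hlt : ENNReal.ofReal c * μ N < μ ({x | x ^ n = 1} ∩ x₀ • (N : Set G))) :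
    ∀ w ∈ N, (w * x₀) ^ n ∈ M := by
  have := M.quotient_finite_of_isOpen hM
  set H : Subgroup (G ⧸ M) := N.map (QuotientGroup.mk' M)
  have : H.Normal := Subgroup.Normal.map ‹_› _ (QuotientGroup.mk'_surjective M)
  set φ : MulAut H := MulAut.conjNormal (x₀ : G ⧸ M)
  set Y := twistedSolutions n φ
  have hx₀' : (x₀ : G ⧸ M) ^ n = 1 := by rw [← QuotientGroup.mk_pow, hx₀, QuotientGroup.mk_one]
  have hφ : φ ^ n = 1 := by rw [← map_pow, hx₀', map_one]
  have hmem : ∀ w (hw : w ∈ N), (⟨w, Subgroup.mem_map_of_mem _ hw⟩ : H) ∈ Y ↔ (w * x₀) ^ n ∈ M :=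
    fun w _ => (mem_twistedSolutions_conjNormal_iff hx₀' _).trans (QuotientGroup.eq_one_iff _)
  have hX : μ ({x | x ^ n = 1} ∩ x₀ • (N : Set G)) ≤ Nat.card Y * μ M := by
    rw [← measure_smul μ x₀⁻¹, Nat.card_coe_set_eq,
      ← Set.ncard_image_of_injective _ Subtype.val_injective,
      ← measure_preimage_mk_eq_ncard_mul μ hM.measurableSet (Set.toFinite _)]
    refine measure_mono ?_
    rintro _ ⟨_, ⟨hy, w, hw, rfl⟩, rfl⟩
    refine ⟨⟨_, Subgroup.mem_map_of_mem _ hw⟩, (hmem w hw).2 ?_, by simp⟩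
    have hconj : w * x₀ = x₀⁻¹ * (x₀ * w) * x₀⁻¹⁻¹ := by group
    rw [hconj, conj_pow, show (x₀ * w) ^ n = 1 from hy, mul_one, mul_inv_cancel]
    exact M.one_mem
  have hcard : c * Nat.card H < Nat.card Y := by
    have h := hlt.trans_le hX
    rw [measure_eq_card_map_mk'_mul μ hM.measurableSet hMN, ← mul_assoc,
      ENNReal.mul_lt_mul_iff_left (hM.measure_ne_zero μ ⟨1, M.one_mem⟩) (measure_ne_top μ _),
      ← ofReal_natCast, ← ofReal_mul' (Nat.cast_nonneg _), ← ofReal_natCast (Nat.card Y),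
      ofReal_lt_ofReal_iff'] at h
    exact h.1
  have := Fintype.ofFinite H
  have hY : Y = Set.univ := Set.eq_univ_of_mul_card_lt_card (hub H φ hφ) hcard
  exact fun w hw => (hmem w hw).1 (hY ▸ trivial)

theorem coset_of_exponent_of_haar_pos_general (n : ℕ) (c : ℝ) (hc : c < 1)
    (hub : ∀ (H : Type) [Group H] [Fintype H] (φ : MulAut H), φ ^ n = 1 →
      (Nat.card {x : H | ((List.range n).map fun i => (φ ^ i) x).prod = 1} : ℝ) /
          Nat.card H ≠ 1 →
      (Nat.card {x : H | ((List.range n).map fun i => (φ ^ i) x).prod = 1} : ℝ) /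
          Nat.card H ≤ c)
    {G : Type} [Group G] [TopologicalSpace G] [IsTopologicalGroup G] [CompactSpace G]
    [TotallyDisconnectedSpace G] [MeasurableSpace G] [BorelSpace G]
    (μ : Measure G) [μ.IsHaarMeasure]
    (hpos : 0 < μ {x : G | x ^ n = 1}) :
    ∃ (M : Subgroup G) (g : G), M.Normal ∧ IsOpen (M : Set G) ∧
      ∀ y ∈ (M : Set G) * {g}, y ^ n = 1 := by
  have hX : IsClosed {x : G | x ^ n = 1} := isClosed_eq (continuous_pow n) continuous_const
  obtain ⟨N, hN⟩ := exists_openNormalSubgroup_mul_measure_mul_lt μ hX hpos.ne'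
    (ENNReal.ofReal_lt_one.2 hc)
  have := Subgroup.quotient_finite_of_isOpen _ N.isOpen'
  obtain ⟨x₀, hx₀, hlt⟩ := exists_mul_measure_lt_measure_inter_smul μ N.isOpen'.measurableSet hN
  refine ⟨N, x₀, N.isNormal', N.isOpen', ?_⟩
  rintro _ ⟨w, hw, _, rfl, rfl⟩
  by_contra hne
  obtain ⟨O, hO⟩ := ProfiniteGrp.exist_openNormalSubgroup_sub_open_nhds_of_one
    isOpen_compl_singleton (Ne.symm hne)
  exact hO (pow_mem_of_lt_measure_inter_smul hub μ (O.isOpen'.inter N.isOpen') inf_le_right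
    hx₀ hlt w hw).1 rfl

/-- Suppose `c < 1` is an upper bound for all the ratios
`|X_{n,φ}(H)| / |H|` (over finite groups `H` and `φ ∈ Aut H` with `φ ^ n = 1`) different
from `1` (i.e. `c_n ≤ c < 1`).  Then every profinite group `G` in which the solution set
of `x ^ n = 1` has positive Haar measure contains a normal open subgroup `M` and an
element `g` such that every element of the coset `M g` has order dividing `n`. -/
theorem coset_of_exponent_of_haar_pos (n : ℕ) (c : ℝ) (hc : c < 1)
    (hub : ∀ (H : Type) [Group H] [Fintype H] (φ : MulAut H), φ ^ n = 1 →
      (Nat.card {x : H | ((List.range n).map fun i => (φ ^ i) x).prod = 1} : ℝ) /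
          Nat.card H ≠ 1 →
      (Nat.card {x : H | ((List.range n).map fun i => (φ ^ i) x).prod = 1} : ℝ) /
          Nat.card H ≤ c)
    {G : Type} [Group G] [TopologicalSpace G] [IsTopologicalGroup G] [CompactSpace G]
    [TotallyDisconnectedSpace G] [T2Space G] [MeasurableSpace G] [BorelSpace G]
    (μ : Measure G) [μ.IsHaarMeasure] [IsProbabilityMeasure μ]
    (hpos : 0 < μ {x : G | x ^ n = 1}) :
    ∃ (M : Subgroup G) (g : G), M.Normal ∧ IsOpen (M : Set G) ∧
      ∀ y ∈ (M : Set G) * {g}, y ^ n = 1 :=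
  coset_of_exponent_of_haar_pos_general n c hc hub μ hpos
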